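/- There exists a universal constant C > 0 such that for every dimension d ≥ 1, every integer Δ ≥ 2, every opening cost f > 0, and every finite nonempty set P ⊆ {1, …, Δ}^d ⊆ ℝ^d, there exists a partition 𝒞 of P such that f · |𝒞| ≤ C · d · (log₂ Δ) · OPT(P, f), and every part S ∈ 𝒞 with Diam(S) > 0 satisfies |S| ≤ C · f / Diam(S), where Diam denotes Euclidean diameter. -/

import Mathlib

/-!
Move the facilities of a near-optimal solution to their nearest clients: this at most doubles
the cost and puts the facilities `F` inside `P`. Assign every client to its nearest facility and
split the clients of each facility into dyadic rings by their connection distance `r`. A ring of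
index `n ≥ 1` has diameter at most `2 ^ n ≤ 4 r`, while the ring of index `0` is the facility
alone, because distinct grid points are at distance at least `1`. As `P` has diameter less than
`2 ^ (d + log₂ Δ + 1)`, each facility has `O(d + log Δ)` rings. Finally, cut every ring `A` into
chunks of at most `⌈f / diam A⌉` points: a chunk `S` has `|S| · diam S ≤ 2 f`, and the ring needs
at most `|A| · diam A / f` chunks beyond the first, which is at most `4 / f` times the connection
cost of `A`. Summing up, `f · |𝒞| ≤ (d + log₂ Δ + 7) · cost(F) = O(d log Δ) · OPT`.
-/

/-- The Uniform Facility Location cost of opening the (nonempty, finite) set of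
facilities `F` for the set of clients `P`. -/
noncomputable def uflCost (d : ℕ) (f : ℝ)
    (P F : Finset (EuclideanSpace ℝ (Fin d))) : ℝ :=
  ∑ p ∈ P, Metric.infDist p (F : Set (EuclideanSpace ℝ (Fin d))) + f * F.card

/-- The optimal Uniform Facility Location cost. -/
noncomputable def uflOPT (d : ℕ) (f : ℝ)
    (P : Finset (EuclideanSpace ℝ (Fin d))) : ℝ :=
  sInf {c : ℝ | ∃ F : Finset (EuclideanSpace ℝ (Fin d)), F.Nonempty ∧ c = uflCost d f P F}

open Finset Metric

open Classical in
noncomputable def dyadicIndex (r : ℝ) : ℕ := Nat.find (pow_unbounded_of_one_lt r one_lt_two)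

theorem lt_two_pow_dyadicIndex (r : ℝ) : r < 2 ^ dyadicIndex r := by
  classical exact Nat.find_spec (pow_unbounded_of_one_lt r one_lt_two)

theorem dyadicIndex_le {r : ℝ} {N : ℕ} (h : r < 2 ^ N) : dyadicIndex r ≤ N := by
  classical exact Nat.find_min' _ h

theorem two_pow_dyadicIndex_le {r : ℝ} (h : dyadicIndex r ≠ 0) : 2 ^ dyadicIndex r ≤ 2 * r := by
  classical
  have hmin : ¬r < 2 ^ (dyadicIndex r - 1) := Nat.find_min _ (Nat.sub_one_lt h)
  rw [← Nat.sub_one_add_one h, pow_succ]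
  linarith

section Partition

variable {α : Type*} [DecidableEq α]

theorem Finset.exists_finpartition_card_parts_le (s : Finset α) {k : ℕ} (hk : 0 < k) :
    ∃ Q : Finpartition s, (∀ t ∈ Q.parts, #t ≤ k) ∧ k * #Q.parts ≤ #s + k := by
  induction hn : #s using Nat.strong_induction_on generalizing s with
  | _ n ih =>
  by_cases hsk : #s ≤ k
  · have htop := Finpartition.parts_top_subset s
    refine ⟨⊤, fun t ht => mem_singleton.1 (htop ht) ▸ hsk, ?_⟩
    have := (card_le_card htop).trans_eq (card_singleton s)
    nlinarith
  · obtain ⟨t, hts, htk⟩ := exists_subset_card_eq (not_le.1 hsk).le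
    have hst : #(s \ t) + k = #s := by rw [card_sdiff_of_subset hts, htk]; omega
    obtain ⟨R, hRk, hRcard⟩ := ih _ (by omega) (s \ t) rfl
    have ht : t ≠ ∅ := (card_pos.1 (htk ▸ hk)).ne_empty
    refine ⟨R.extend ht disjoint_sdiff_self_left (sdiff_union_of_subset hts), ?_, ?_⟩
    · intro u hu
      rcases mem_insert.1 hu with rfl | hu
      · exact htk.le
      · exact hRk u hu
    · rw [Finpartition.card_extend, mul_add_one]
      omega

theorem Finpartition.sum_card_mul_le_sum {s : Finset α} (G : Finpartition s) {u : Finset α → ℝ}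
    {w : α → ℝ} (h : ∀ A ∈ G.parts, ∀ p ∈ A, u A ≤ w p) :
    ∑ A ∈ G.parts, #A * u A ≤ ∑ p ∈ s, w p := by
  calc ∑ A ∈ G.parts, #A * u A = ∑ A ∈ G.parts, ∑ _p ∈ A, u A := by
        simp only [sum_const, nsmul_eq_mul]
    _ ≤ ∑ A ∈ G.parts, ∑ p ∈ A, w p := sum_le_sum fun A hA => sum_le_sum (h A hA)
    _ = ∑ p ∈ G.parts.biUnion id, w p := (sum_biUnion G.supIndep.pairwiseDisjoint).symm
    _ = ∑ p ∈ s, w p := by rw [G.biUnion_parts]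

end Partition

section Metric

variable {X : Type*} [MetricSpace X]

theorem Finset.diam_le_diam_of_subset {s t : Finset X} (h : s ⊆ t) :
    diam (s : Set X) ≤ diam (t : Set X) :=
  diam_mono (coe_subset.2 h) t.finite_toSet.isBounded

theorem Finset.diam_eq_zero_of_card_le_one {s : Finset X} (h : #s ≤ 1) : diam (s : Set X) = 0 :=
  diam_subsingleton (card_le_one_iff_subsingleton.1 h)

theorem diam_le_four_mul_dist_of_dyadicIndex_eq {P A : Finset X} (hAP : A ⊆ P)
    (hsep : ∀ p ∈ P, ∀ q ∈ P, p ≠ q → 1 ≤ dist p q) {c : X} (hc : c ∈ P) {n : ℕ}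
    (hA : ∀ b ∈ A, dyadicIndex (2 * dist b c) = n) {p : X} (hp : p ∈ A) :
    diam (A : Set X) ≤ 4 * dist p c := by
  have hball : ∀ b ∈ A, 2 * dist b c < 2 ^ n := fun b hb =>
    hA b hb ▸ lt_two_pow_dyadicIndex _
  rcases eq_or_ne n 0 with rfl | hn
  · have hAc : A ⊆ {c} := fun b hb => by
      by_contra hbc
      have := hsep b (hAP hb) c hc fun h => hbc (mem_singleton.2 h)
      linarith [hball b hb, pow_zero (2 : ℝ)]
    rw [diam_eq_zero_of_card_le_one ((card_le_card hAc).trans_eq (card_singleton c))]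
    positivity
  · calc diam (A : Set X) ≤ 2 * (2 ^ n / 2) :=
          diam_le_of_subset_closedBall (x := c) (by positivity) fun b hb =>
            mem_closedBall.2 (by linarith [hball b hb])
      _ = 2 ^ n := by ring
      _ ≤ 4 * dist p c := by
          have := two_pow_dyadicIndex_le ((hA p hp).symm ▸ hn : dyadicIndex (2 * dist p c) ≠ 0)
          rw [hA p hp] at this
          linarith

theorem exists_subset_infDist_le_two_mul {P F : Finset X} (hP : P.Nonempty) (hF : F.Nonempty) :
    ∃ F' ⊆ P, F'.Nonempty ∧ #F' ≤ #F ∧ ∀ p ∈ P, infDist p F' ≤ 2 * infDist p F := by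
  classical
  choose π hπP hπ using
    fun x => P.finite_toSet.isCompact.exists_infDist_eq_dist (coe_nonempty.2 hP) x
  refine ⟨F.image π, fun y hy => ?_, hF.image π, card_image_le, fun p hp => ?_⟩
  · obtain ⟨x, -, rfl⟩ := mem_image.1 hy
    exact hπP x
  · obtain ⟨m, hmF, hm⟩ := F.finite_toSet.isCompact.exists_infDist_eq_dist (coe_nonempty.2 hF) p
    calc infDist p (F.image π) ≤ dist p (π m) :=
          infDist_le_dist_of_mem (mem_coe.2 (mem_image_of_mem π hmF))
      _ ≤ dist p m + dist m (π m) := dist_triangle _ _ _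
      _ ≤ dist p m + dist m p := by
          rw [← hπ m]; gcongr; exact infDist_le_dist_of_mem (mem_coe.2 hp)
      _ = 2 * infDist p F := by rw [dist_comm m, hm]; ring

variable [DecidableEq X]

theorem Finset.exists_finpartition_card_mul_diam_le (A : Finset X) {f : ℝ} (hf : 0 < f) :
    ∃ Q : Finpartition A, (∀ S ∈ Q.parts, #S * diam (S : Set X) ≤ 2 * f) ∧
      f * #Q.parts ≤ f + #A * diam (A : Set X) := by
  set D := diam (A : Set X)
  set k := max 1 ⌈f / D⌉₊
  obtain ⟨Q, hQk, hQcard⟩ := A.exists_finpartition_card_parts_le (k := k) (by positivity)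
  refine ⟨Q, fun S hS => ?_, ?_⟩
  · rcases le_or_gt #S 1 with hS1 | hS1
    · rw [diam_eq_zero_of_card_le_one hS1, mul_zero]
      positivity
    have hSk := hQk S hS
    have hk : 1 < ⌈f / D⌉₊ := by omega
    have hfD : 1 < f / D := by exact_mod_cast Nat.lt_ceil.1 hk
    have hD : 0 < D := (div_pos_iff_of_pos_left hf).1 (by linarith)
    calc (#S : ℝ) * diam (S : Set X) ≤ ⌈f / D⌉₊ * D := by
          gcongr
          · exact_mod_cast hSk.trans_eq (max_eq_right hk.le)
          · exact diam_le_diam_of_subset (Q.le hS)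
      _ ≤ 2 * (f / D) * D := by gcongr; exact (Nat.ceil_lt_two_mul (by linarith)).le
      _ = 2 * f := by field_simp
  · have hcard : (k : ℝ) * #Q.parts ≤ #A + k := by exact_mod_cast hQcard
    rcases (diam_nonneg : 0 ≤ D).eq_or_lt with hD | hD
    · have hA : #A ≤ 1 := by
        by_contra! h
        exact (diam_pos (one_lt_card_iff_nontrivial.1 h) A.finite_toSet.isBounded).ne' hD.symm
      have : (#Q.parts : ℝ) ≤ 1 := by exact_mod_cast Q.card_parts_le_card.trans hA
      rw [show D = 0 from hD.symm]
      nlinarith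
    · have hfk : f ≤ D * k := by
        rw [← div_le_iff₀' hD]
        exact (Nat.le_ceil _).trans (by exact_mod_cast le_max_right _ _)
      have hk0 : (0 : ℝ) < k := by positivity
      nlinarith

theorem Finpartition.exists_card_mul_diam_le {s : Finset X} (G : Finpartition s) {f : ℝ}
    (hf : 0 < f) {w : X → ℝ} (hw : ∀ A ∈ G.parts, ∀ p ∈ A, diam (A : Set X) ≤ w p) :
    ∃ Q : Finpartition s, (∀ S ∈ Q.parts, #S * diam (S : Set X) ≤ 2 * f) ∧
      f * #Q.parts ≤ f * #G.parts + ∑ p ∈ s, w p := by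
  choose R hR using fun A : Finset X => A.exists_finpartition_card_mul_diam_le hf
  refine ⟨G.bind fun A _ => R A, fun S hS => ?_, ?_⟩
  · obtain ⟨A, -, hSA⟩ := Finpartition.mem_bind.1 hS
    exact (hR A).1 S hSA
  · calc f * #(G.bind fun A _ => R A).parts = ∑ A ∈ G.parts, f * #(R A).parts := by
          rw [Finpartition.card_bind, Nat.cast_sum, mul_sum]
          exact sum_attach G.parts fun A => f * #(R A).parts
      _ ≤ ∑ A ∈ G.parts, (f + #A * diam (A : Set X)) := sum_le_sum fun A _ => (hR A).2
      _ ≤ f * #G.parts + ∑ p ∈ s, w p := by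
          rw [sum_add_distrib, sum_const, nsmul_eq_mul, mul_comm]
          gcongr
          exact G.sum_card_mul_le_sum hw

theorem exists_finpartition_diam_le_four_mul_infDist {P F : Finset X} (hFP : F ⊆ P)
    (hF : F.Nonempty) (hsep : ∀ p ∈ P, ∀ q ∈ P, p ≠ q → 1 ≤ dist p q) {N : ℕ}
    (hN : ∀ p ∈ P, ∀ q ∈ P, 2 * dist p q < 2 ^ N) :
    ∃ G : Finpartition P, #G.parts ≤ #F * (N + 1) ∧
      ∀ A ∈ G.parts, ∀ p ∈ A, diam (A : Set X) ≤ 4 * infDist p F := by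
  classical
  choose g hgF hg using
    fun x => F.finite_toSet.isCompact.exists_infDist_eq_dist (coe_nonempty.2 hF) x
  let κ : X → X × ℕ := fun p => (g p, dyadicIndex (2 * dist p (g p)))
  refine ⟨Finpartition.ofSetSetoid (Setoid.ker κ) P, ?_, ?_⟩
  · rw [Finpartition.ofSetSetoid_parts]
    calc #(P.image fun a => {b ∈ P | Setoid.ker κ a b})
          ≤ #((P.image κ).image fun t => {b ∈ P | t = κ b}) :=
          card_le_card <| image_subset_iff.2 fun a ha =>
            mem_image.2 ⟨κ a, mem_image_of_mem κ ha, by ext b; simp [Setoid.ker_def]⟩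
      _ ≤ #(P.image κ) := card_image_le
      _ ≤ #(F ×ˢ range (N + 1)) := card_le_card <| image_subset_iff.2 fun p hp =>
          mem_product.2 ⟨hgF p, mem_range.2 <| Nat.lt_succ_of_le <|
            dyadicIndex_le (hN p hp (g p) (hFP (hgF p)))⟩
      _ = #F * (N + 1) := by rw [card_product, card_range]
  · intro A hA p hpA
    rw [Finpartition.ofSetSetoid_parts] at hA
    obtain ⟨a, -, rfl⟩ := mem_image.1 hA
    have hκ : ∀ b ∈ {b ∈ P | Setoid.ker κ a b}, g b = g a ∧
        dyadicIndex (2 * dist b (g a)) = dyadicIndex (2 * dist a (g a)) := fun b hb => by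
      obtain ⟨hgab, hidx⟩ := Prod.ext_iff.1 (mem_filter.1 hb).2
      dsimp only [κ] at hgab hidx
      rw [← hgab] at hidx
      exact ⟨hgab.symm, hidx.symm⟩
    rw [hg p, (hκ p hpA).1]
    exact diam_le_four_mul_dist_of_dyadicIndex_eq (filter_subset _ _) hsep (hFP (hgF a))
      (fun b hb => (hκ b hb).2) hpA

theorem exists_finpartition_card_mul_diam_le_of_separated {P F : Finset X} (hFP : F ⊆ P)
    (hF : F.Nonempty) (hsep : ∀ p ∈ P, ∀ q ∈ P, p ≠ q → 1 ≤ dist p q) {N : ℕ}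
    (hN : ∀ p ∈ P, ∀ q ∈ P, 2 * dist p q < 2 ^ N) {f : ℝ} (hf : 0 < f) :
    ∃ Q : Finpartition P, (∀ S ∈ Q.parts, #S * diam (S : Set X) ≤ 2 * f) ∧
      f * #Q.parts ≤ (N + 5) * (∑ p ∈ P, infDist p F + f * #F) := by
  obtain ⟨G, hGcard, hGdiam⟩ := exists_finpartition_diam_le_four_mul_infDist hFP hF hsep hN
  obtain ⟨Q, hQdiam, hQcard⟩ := G.exists_card_mul_diam_le hf hGdiam
  refine ⟨Q, hQdiam, ?_⟩
  have hG : (#G.parts : ℝ) ≤ #F * (N + 1) := by exact_mod_cast hGcard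
  have hS : 0 ≤ ∑ p ∈ P, infDist p F := sum_nonneg fun _ _ => infDist_nonneg
  have hfF : 0 ≤ f * #F := by positivity
  calc f * #Q.parts ≤ f * #G.parts + ∑ p ∈ P, 4 * infDist p F := hQcard
    _ ≤ (N + 1) * (f * #F) + 4 * ∑ p ∈ P, infDist p F := by
        rw [← mul_sum]; nlinarith
    _ ≤ (N + 5) * (∑ p ∈ P, infDist p F + f * #F) := by nlinarith

end Metric

section Euclidean

variable {ι : Type*} [Fintype ι]

theorem EuclideanSpace.one_le_dist_of_ne {x y : EuclideanSpace ℝ ι} (hx : ∀ i, ∃ m : ℤ, x i = m)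
    (hy : ∀ i, ∃ n : ℤ, y i = n) (hxy : x ≠ y) : 1 ≤ dist x y := by
  obtain ⟨i, hi⟩ : ∃ i, x i ≠ y i := by
    by_contra! h
    exact hxy (PiLp.ext h)
  obtain ⟨m, hm⟩ := hx i
  obtain ⟨n, hn⟩ := hy i
  rw [hm, hn] at hi
  calc (1 : ℝ) ≤ |(m : ℝ) - n| := by
        exact_mod_cast Int.one_le_abs (sub_ne_zero.2 fun h => hi (by rw [h]))
    _ = dist (x i) (y i) := by rw [hm, hn, Real.dist_eq]
    _ ≤ dist x y := PiLp.dist_apply_le x y i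

theorem EuclideanSpace.dist_le_card_mul {x y : EuclideanSpace ℝ ι} {B : ℝ} (hB : 0 ≤ B)
    (h : ∀ i, dist (x i) (y i) ≤ B) : dist x y ≤ Fintype.card ι * B := by
  have hcard : (Fintype.card ι : ℝ) ≤ (Fintype.card ι : ℝ) ^ 2 := by
    exact_mod_cast Nat.le_self_pow two_ne_zero _
  rw [EuclideanSpace.dist_eq, Real.sqrt_le_left (by positivity)]
  calc ∑ i, dist (x i) (y i) ^ 2 ≤ ∑ _i : ι, B ^ 2 := by gcongr with i; exact h i
    _ = Fintype.card ι * B ^ 2 := by simp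
    _ ≤ (Fintype.card ι * B) ^ 2 := by nlinarith [sq_nonneg B]

theorem EuclideanSpace.two_mul_dist_lt_of_grid {Δ : ℕ} {x y : EuclideanSpace ℝ ι}
    (hx : ∀ i, ∃ k : ℕ, 1 ≤ k ∧ k ≤ Δ ∧ x i = k) (hy : ∀ i, ∃ k : ℕ, 1 ≤ k ∧ k ≤ Δ ∧ y i = k) :
    2 * dist x y < 2 ^ (Fintype.card ι + Nat.log 2 Δ + 2) := by
  have hIcc : ∀ z : EuclideanSpace ℝ ι, (∀ i, ∃ k : ℕ, 1 ≤ k ∧ k ≤ Δ ∧ z i = k) →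
      ∀ i, z i ∈ Set.Icc (0 : ℝ) Δ := fun z hz i => by
    obtain ⟨k, -, hk, hzk⟩ := hz i
    exact hzk ▸ ⟨k.cast_nonneg, by exact_mod_cast hk⟩
  have hdist : dist x y ≤ Fintype.card ι * Δ := EuclideanSpace.dist_le_card_mul Δ.cast_nonneg
    fun i => (Real.dist_le_of_mem_Icc (hIcc x hx i) (hIcc y hy i)).trans_eq (sub_zero _)
  have hlt : Fintype.card ι * Δ < 2 ^ Fintype.card ι * 2 ^ (Nat.log 2 Δ + 1) :=
    Nat.mul_lt_mul'' Nat.lt_two_pow_self (Nat.lt_pow_succ_log_self one_lt_two Δ)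
  have hlt' : (Fintype.card ι * Δ : ℝ) < 2 ^ Fintype.card ι * 2 ^ (Nat.log 2 Δ + 1) := by
    exact_mod_cast hlt
  rw [show Fintype.card ι + Nat.log 2 Δ + 2 = 1 + (Fintype.card ι + (Nat.log 2 Δ + 1)) by ring,
    pow_add, pow_add, pow_one]
  linarith

end Euclidean

theorem le_uflCost {d : ℕ} {f : ℝ} (hf : 0 ≤ f) (P : Finset (EuclideanSpace ℝ (Fin d)))
    {F : Finset (EuclideanSpace ℝ (Fin d))} (hF : F.Nonempty) : f ≤ uflCost d f P F := by
  have h1 : f ≤ f * #F := le_mul_of_one_le_right hf (by exact_mod_cast hF.card_pos)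
  have h2 : 0 ≤ ∑ p ∈ P, infDist p F := sum_nonneg fun _ _ => infDist_nonneg
  unfold uflCost
  linarith

theorem le_uflOPT {d : ℕ} {f : ℝ} (hf : 0 ≤ f) (P : Finset (EuclideanSpace ℝ (Fin d))) :
    f ≤ uflOPT d f P := by
  refine le_csInf ⟨uflCost d f P {0}, {0}, singleton_nonempty 0, rfl⟩ ?_
  rintro _ ⟨F, hF, rfl⟩
  exact le_uflCost hf P hF

theorem exists_subset_uflCost_le_three_mul {d : ℕ} {f : ℝ} (hf : 0 < f)
    {P : Finset (EuclideanSpace ℝ (Fin d))} (hP : P.Nonempty) :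
    ∃ F ⊆ P, F.Nonempty ∧ uflCost d f P F ≤ 3 * uflOPT d f P := by
  have hOPT := le_uflOPT hf.le P (d := d)
  obtain ⟨_, ⟨F₀, hF₀, rfl⟩, hlt⟩ := exists_lt_of_csInf_lt
    (s := {c | ∃ F : Finset (EuclideanSpace ℝ (Fin d)), F.Nonempty ∧ c = uflCost d f P F})
    ⟨uflCost d f P {0}, {0}, singleton_nonempty 0, rfl⟩
    (show uflOPT d f P < 3 / 2 * uflOPT d f P by linarith)
  obtain ⟨F, hFP, hF, hcard, hdist⟩ := exists_subset_infDist_le_two_mul hP hF₀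
  refine ⟨F, hFP, hF, ?_⟩
  have hsum : ∑ p ∈ P, infDist p F ≤ 2 * ∑ p ∈ P, infDist p F₀ := by
    rw [mul_sum]; exact sum_le_sum hdist
  have hfF : f * #F ≤ f * #F₀ := by gcongr
  have hfF₀ : 0 ≤ f * #F₀ := by positivity
  unfold uflCost at hlt ⊢
  linarith

/-- **extended MP clustering.** There is a universal constant
`C > 0` such that for every `d ≥ 1`, integer `Δ ≥ 2`, opening cost `f > 0` and
finite nonempty `P ⊆ {1, …, Δ}^d`, there is a partition `𝒞` of `P` with
`f · |𝒞| ≤ C · d · log₂ Δ · OPT(P, f)`, and every part `S ∈ 𝒞` of positive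
diameter satisfies `|S| ≤ C · f / Diam(S)`. -/
theorem stmt_7 :
    ∃ C : ℝ, 0 < C ∧
      ∀ (d : ℕ), 1 ≤ d → ∀ (Δ : ℕ), 2 ≤ Δ → ∀ f : ℝ, 0 < f →
      ∀ P : Finset (EuclideanSpace ℝ (Fin d)), P.Nonempty →
        (∀ p ∈ P, ∀ i : Fin d, ∃ k : ℕ, 1 ≤ k ∧ k ≤ Δ ∧ p i = (k : ℝ)) →
        ∃ 𝒞 : Finset (Finset (EuclideanSpace ℝ (Fin d))),
          (∀ S ∈ 𝒞, S.Nonempty ∧ S ⊆ P) ∧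
          (∀ p ∈ P, ∃! S, S ∈ 𝒞 ∧ p ∈ S) ∧
          f * 𝒞.card ≤ C * d * Real.logb 2 Δ * uflOPT d f P ∧
          (∀ S ∈ 𝒞, 0 < Metric.diam (S : Set (EuclideanSpace ℝ (Fin d))) →
            (S.card : ℝ) ≤ C * f / Metric.diam (S : Set (EuclideanSpace ℝ (Fin d)))) := by
  classical
  refine ⟨27, by norm_num, fun d hd Δ hΔ f hf P hP hgrid => ?_⟩
  have hint : ∀ p ∈ P, ∀ i, ∃ m : ℤ, p i = m := fun p hp i => by
    obtain ⟨k, -, -, hk⟩ := hgrid p hp i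
    exact ⟨k, by rw [hk]; norm_cast⟩
  have hsep : ∀ p ∈ P, ∀ q ∈ P, p ≠ q → 1 ≤ dist p q := fun p hp q hq =>
    EuclideanSpace.one_le_dist_of_ne (hint p hp) (hint q hq)
  have hN : ∀ p ∈ P, ∀ q ∈ P, 2 * dist p q < 2 ^ (d + Nat.log 2 Δ + 2) := fun p hp q hq => by
    simpa using EuclideanSpace.two_mul_dist_lt_of_grid (hgrid p hp) (hgrid q hq)
  obtain ⟨F, hFP, hF, hcost⟩ := exists_subset_uflCost_le_three_mul hf hP
  obtain ⟨Q, hQdiam, hQcard⟩ := exists_finpartition_card_mul_diam_le_of_separated hFP hF hsep hN hf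
  have hlog : (d + Nat.log 2 Δ + 2 + 5 : ℝ) ≤ 9 * d * Real.logb 2 Δ := by
    have h1 : (Nat.log 2 Δ : ℝ) ≤ Real.logb 2 Δ := by exact_mod_cast Real.natLog_le_logb Δ 2
    have h2 : 1 ≤ Real.logb 2 Δ := by
      rw [Real.le_logb_iff_rpow_le one_lt_two (by positivity), Real.rpow_one]
      exact_mod_cast hΔ
    have h3 : (1 : ℝ) ≤ d := by exact_mod_cast hd
    nlinarith
  refine ⟨Q.parts, fun S hS => ⟨Q.nonempty_of_mem_parts hS, Q.le hS⟩,
    fun p hp => Q.existsUnique_mem hp, ?_, fun S hS hpos => ?_⟩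
  · calc f * #Q.parts ≤ (d + Nat.log 2 Δ + 2 + 5 : ℝ) * uflCost d f P F := mod_cast hQcard
      _ ≤ 9 * d * Real.logb 2 Δ * (3 * uflOPT d f P) :=
          mul_le_mul hlog hcost (hf.le.trans (le_uflCost hf.le P hF))
            ((by positivity : (0 : ℝ) ≤ d + Nat.log 2 Δ + 2 + 5).trans hlog)
      _ = 27 * d * Real.logb 2 Δ * uflOPT d f P := by ring
  · rw [le_div_iff₀ hpos]
    linarith [hQdiam S hS]
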